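/- arXiv:2602.23565 — 2 statements merged into one kernel-verified Lean document; each statement's English description precedes it below -/
import Mathlib

section
/- Fix R > 0 and α ∈ (0,1]. For θ = (θ₁,…,θ_C) ∈ (ℝ^d)^C and x ∈ ℝ^d with ‖x‖ ≤ R define the softmax output h_θ(x)_c = exp(⟨x, θ_c⟩)/Σ_{j=1}^C exp(⟨x, θ_j⟩). Suppose θ, θ′ ∈ (ℝ^d)^C are such that along the segment joining them every softmax coordinate satisfies h_·(x)_c ≥ α. Then Σ_{c=1}^C |h_θ(x)_c − h_{θ′}(x)_c| ≤ R·√(2(1−α))·‖θ − θ′‖. -/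
open scoped RealInnerProductSpace

/-!
Write `e` for the signs of `softmax z - softmax w`. The `ℓ¹` distance is `φ 1 - φ 0` for
`φ s = ∑ c, e c * softmax (w + s • (z - w)) c`, and `φ' s` is the covariance of `e` and `z - w`
under the distribution `softmax (w + s • (z - w))`, which Cauchy–Schwarz bounds by `‖z - w‖₂`.
So softmax is `1`-Lipschitz from `ℓ²` logits to `ℓ¹`, and the logits `⟪x, θ c⟫` move by at most
`‖x‖ ‖θ - θ'‖`. With two or more classes the floor forces `α ≤ 1/2`, hence `√(2(1 - α)) ≥ 1`;
with a single class softmax is constant.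
-/

open Finset Real

section Softmax

variable {ι : Type*} [Fintype ι]

noncomputable def softmax (z : ι → ℝ) (c : ι) : ℝ :=
  exp (z c) / ∑ j, exp (z j)

lemma sum_exp_pos [Nonempty ι] (z : ι → ℝ) : 0 < ∑ j, exp (z j) :=
  sum_pos (fun _ _ => exp_pos _) univ_nonempty

lemma softmax_nonneg (z : ι → ℝ) (c : ι) : 0 ≤ softmax z c := by
  unfold softmax; positivity

lemma sum_softmax [Nonempty ι] (z : ι → ℝ) : ∑ c, softmax z c = 1 := by
  simp only [softmax, ← sum_div]
  exact div_self (sum_exp_pos z).ne'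

lemma softmax_eq_one [Subsingleton ι] (z : ι → ℝ) (c : ι) : softmax z c = 1 := by
  rw [softmax, Fintype.sum_subsingleton _ c, div_self (exp_pos _).ne']

lemma hasDerivAt_softmax_add_smul (a b : ι → ℝ) (c : ι) (t : ℝ) :
    HasDerivAt (fun s => softmax (a + s • b) c)
      (softmax (a + t • b) c * (b c - ∑ j, softmax (a + t • b) j * b j)) t := by
  have : Nonempty ι := ⟨c⟩
  have hline (j : ι) : HasDerivAt (fun s => exp (a j + s * b j)) (exp (a j + t * b j) * b j) t :=
    by simpa using (((hasDerivAt_id t).mul_const (b j)).const_add (a j)).exp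
  have hS := sum_exp_pos (a + t • b)
  simp only [Pi.add_apply, Pi.smul_apply, smul_eq_mul] at hS
  refine ((hline c).div (HasDerivAt.fun_sum fun j _ => hline j) hS.ne').congr_deriv ?_
  simp only [softmax, Pi.add_apply, Pi.smul_apply, smul_eq_mul, div_mul_eq_mul_div, ← sum_div]
  field_simp

lemma abs_sum_mul_mul_sub_le {p e b : ι → ℝ} (hp0 : ∀ c, 0 ≤ p c) (hp1 : ∑ c, p c = 1)
    (he : ∀ c, |e c| ≤ 1) :
    |∑ c, e c * (p c * (b c - ∑ j, p j * b j))| ≤ √(∑ c, b c ^ 2) := by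
  set E := ∑ j, p j * e j
  have hcov : ∑ c, e c * (p c * (b c - ∑ j, p j * b j)) = ∑ c, p c * (e c - E) * b c := by
    have hterm (c : ι) : e c * (p c * (b c - ∑ j, p j * b j)) - p c * (e c - E) * b c
        = E * (p c * b c) - (p c * e c) * ∑ j, p j * b j := by ring
    rw [← sub_eq_zero, ← sum_sub_distrib, sum_congr rfl fun c _ => hterm c, sum_sub_distrib,
      ← mul_sum, ← sum_mul]
    ring
  have hvar : ∑ c, p c * (e c - E) ^ 2 = ∑ c, p c * e c ^ 2 - E ^ 2 := by
    have hterm (c : ι) : p c * (e c - E) ^ 2 = p c * e c ^ 2 - 2 * E * (p c * e c) + E ^ 2 * p c := by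
      ring
    rw [sum_congr rfl fun c _ => hterm c, sum_add_distrib, sum_sub_distrib, ← mul_sum, ← mul_sum,
      hp1]
    ring
  have hle : ∑ c, (p c * (e c - E)) ^ 2 ≤ 1 := calc
    ∑ c, (p c * (e c - E)) ^ 2 ≤ ∑ c, p c * (e c - E) ^ 2 := by
      gcongr with c
      have : p c ≤ 1 := hp1 ▸ single_le_sum (fun j _ => hp0 j) (mem_univ c)
      rw [mul_pow]
      gcongr
      nlinarith [hp0 c]
    _ = ∑ c, p c * e c ^ 2 - E ^ 2 := hvar
    _ ≤ ∑ c, p c * e c ^ 2 := sub_le_self _ (sq_nonneg E)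
    _ ≤ ∑ c, p c := sum_le_sum fun c _ =>
      mul_le_of_le_one_right (hp0 c) ((sq_le_one_iff_abs_le_one _).mpr (he c))
    _ = 1 := hp1
  rw [hcov, ← sqrt_sq_eq_abs]
  gcongr
  have hb : 0 ≤ ∑ c, b c ^ 2 := by positivity
  nlinarith [sum_mul_sq_le_sq_mul_sq univ (fun c => p c * (e c - E)) b]

theorem sum_abs_softmax_sub_le (z w : ι → ℝ) :
    ∑ c, |softmax z c - softmax w c| ≤ √(∑ c, (z c - w c) ^ 2) := by
  set e : ι → ℝ := fun c => SignType.sign (softmax z c - softmax w c)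
  have he (c : ι) : |e c| ≤ 1 := by
    simp only [e]
    rcases SignType.sign (softmax z c - softmax w c) with _ | _ | _ <;> simp
  set φ : ℝ → ℝ := fun s => ∑ c, e c * softmax (w + s • (z - w)) c
  have hφ (s : ℝ) : HasDerivAt φ (∑ c, e c * (softmax (w + s • (z - w)) c *
      ((z - w) c - ∑ j, softmax (w + s • (z - w)) j * (z - w) j))) s :=
    HasDerivAt.fun_sum fun c _ => (hasDerivAt_softmax_add_smul w (z - w) c s).const_mul (e c)
  have hmvt := norm_image_sub_le_of_norm_deriv_le_segment_01' (f := φ)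
    (C := √(∑ c, (z c - w c) ^ 2)) (fun s _ => (hφ s).hasDerivWithinAt) fun s _ => by
      rcases isEmpty_or_nonempty ι with _ | _
      · simp
      exact abs_sum_mul_mul_sub_le (softmax_nonneg _) (sum_softmax _) he
  calc ∑ c, |softmax z c - softmax w c| = φ 1 - φ 0 := by
        simp only [φ, one_smul, zero_smul, add_zero, add_sub_cancel, ← sum_sub_distrib, ← mul_sub,
          e, sign_mul_self]
    _ ≤ _ := (le_abs_self _).trans hmvt

theorem sum_abs_softmax_sub_le_of_le_softmax {α : ℝ} {z : ι → ℝ} (w : ι → ℝ)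
    (hα : ∀ c, α ≤ softmax z c) :
    ∑ c, |softmax z c - softmax w c| ≤ √(2 * (1 - α)) * √(∑ c, (z c - w c) ^ 2) := by
  rcases subsingleton_or_nontrivial ι with _ | _
  · simp only [softmax_eq_one, sub_self, abs_zero, sum_const_zero]
    positivity
  obtain ⟨c, c', hcc'⟩ := exists_pair_ne ι
  classical
  have h2α : 2 * α ≤ 1 := calc
    2 * α ≤ ∑ j ∈ {c, c'}, softmax z j := by rw [sum_pair hcc']; linarith [hα c, hα c']
    _ ≤ 1 := sum_softmax z ▸ sum_le_univ_sum_of_nonneg (softmax_nonneg z)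
  have : 1 ≤ √(2 * (1 - α)) := one_le_sqrt.mpr (by linarith)
  calc ∑ c, |softmax z c - softmax w c| ≤ √(∑ c, (z c - w c) ^ 2) := sum_abs_softmax_sub_le z w
    _ ≤ _ := le_mul_of_one_le_left (sqrt_nonneg _) this

end Softmax

lemma sqrt_sum_inner_sq_le {ι E : Type*} [Fintype ι] [NormedAddCommGroup E] [InnerProductSpace ℝ E]
    (x : E) (v : PiLp 2 fun _ : ι => E) : √(∑ c, ⟪x, v c⟫ ^ 2) ≤ ‖x‖ * ‖v‖ := by
  rw [PiLp.norm_eq_of_L2, ← sqrt_sq (norm_nonneg x), ← sqrt_mul (sq_nonneg _), mul_sum]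
  gcongr with c
  rw [← mul_pow, sq_le_sq]
  exact (abs_real_inner_le_norm x (v c)).trans (le_abs_self _)

theorem softmax_l1_lipschitz_general {d C : ℕ} (R α : ℝ)
    (x : EuclideanSpace ℝ (Fin d)) (hx : ‖x‖ ≤ R)
    (h : PiLp 2 (fun _ : Fin C => EuclideanSpace ℝ (Fin d)) → Fin C → ℝ)
    (hh : ∀ θ c, h θ c = Real.exp ⟪x, θ c⟫ / ∑ j, Real.exp ⟪x, θ j⟫)
    (θ θ' : PiLp 2 (fun _ : Fin C => EuclideanSpace ℝ (Fin d)))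
    (hfloor : ∀ ξ ∈ segment ℝ θ θ', ∀ c, α ≤ h ξ c) :
    ∑ c, |h θ c - h θ' c| ≤ R * Real.sqrt (2 * (1 - α)) * ‖θ - θ'‖ := by
  have hsoftmax (ψ) : h ψ = softmax fun j => ⟪x, ψ j⟫ := funext (hh ψ)
  have hθ : ∀ c, α ≤ softmax (fun j => ⟪x, θ j⟫) c := by
    simpa only [hsoftmax] using hfloor θ (left_mem_segment ℝ θ θ')
  rw [hsoftmax θ, hsoftmax θ']
  calc _ ≤ √(2 * (1 - α)) * √(∑ c, (⟪x, θ c⟫ - ⟪x, θ' c⟫) ^ 2) :=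
        sum_abs_softmax_sub_le_of_le_softmax _ hθ
    _ = √(2 * (1 - α)) * √(∑ c, ⟪x, (θ - θ') c⟫ ^ 2) := by
        simp only [PiLp.sub_apply, inner_sub_right]
    _ ≤ √(2 * (1 - α)) * (‖x‖ * ‖θ - θ'‖) := by gcongr; exact sqrt_sum_inner_sq_le x _
    _ ≤ R * √(2 * (1 - α)) * ‖θ - θ'‖ := by
        rw [mul_left_comm, ← mul_assoc]
        gcongr

/-- Lipschitzness (in ℓ₁) of the softmax map with respect to the parameters,
given a probability floor `α` along the segment joining the two parameter points. -/
theorem softmax_l1_lipschitz {d C : ℕ} (R α : ℝ) (hR : 0 < R)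
    (hα : α ∈ Set.Ioc (0 : ℝ) 1)
    (x : EuclideanSpace ℝ (Fin d)) (hx : ‖x‖ ≤ R)
    (h : PiLp 2 (fun _ : Fin C => EuclideanSpace ℝ (Fin d)) → Fin C → ℝ)
    (hh : ∀ θ c, h θ c = Real.exp ⟪x, θ c⟫ / ∑ j, Real.exp ⟪x, θ j⟫)
    (θ θ' : PiLp 2 (fun _ : Fin C => EuclideanSpace ℝ (Fin d)))
    (hfloor : ∀ ξ ∈ segment ℝ θ θ', ∀ c, α ≤ h ξ c) :
    ∑ c, |h θ c - h θ' c| ≤ R * Real.sqrt (2 * (1 - α)) * ‖θ - θ'‖ :=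
  softmax_l1_lipschitz_general R α x hx h hh θ θ' hfloor
end

section
/- Let 0 < ε < Γ. Set C = √(Γ+ε) − 1 and α = ε/(C+1)² = ε/(Γ+ε). Let x be uniformly distributed on [−√3, √3], and let (x,y) be drawn so that with probability α, y = C·x, and with probability 1−α, y = −x; define 𝓡(θ) = E[(y − θ·x)²]. Then α ∈ (0,1), the global minimizer θ⋆ = αC − (1−α) satisfies 𝓡(θ⋆) ≤ ε, while the specialist parameter θ̄₁ = C (the minimizer of the risk restricted to the first mixture component) satisfies 𝓡(θ̄₁) = Γ ≥ Γ. -/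
/-!
Under the label `y = c x` with `x` drawn from `μ`, the squared residual of `θ` is
`(c - θ)² x²`, so the risk of a mixture of two such linear labellings is a
weighted sum of two squares times the second moment of `μ`, which is `1` for the
uniform law on `[-√3, √3]`. The identity
`α (c - θ)² + (1 - α) (d - θ)² = α (1 - α) (c - d)² + (θ - (α c + (1 - α) d))²`
then gives the minimizer and both risk values; the constants are chosen so that
`(C + 1)² = Γ + ε` and `α (Γ + ε) = ε`.
-/

open MeasureTheory Set

lemma integral_sq_uniform_Icc_neg {a : ℝ} (ha : 0 < a) :
    ∫ x, x ^ 2 ∂((ENNReal.ofReal (2 * a))⁻¹ • volume.restrict (Icc (-a) a)) = a ^ 2 / 3 := by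
  have h2a : 0 < 2 * a := by positivity
  rw [integral_smul_measure, ENNReal.toReal_inv, ENNReal.toReal_ofReal h2a.le,
    integral_Icc_eq_integral_Ioc, ← intervalIntegral.integral_of_le (by linarith), integral_pow,
    smul_eq_mul]
  field_simp
  ring

lemma integrable_sq_smul_restrict_Icc {c : ENNReal} (hc : c ≠ ⊤) (a b : ℝ) :
    Integrable (fun x : ℝ => x ^ 2) (c • volume.restrict (Icc a b)) :=
  (continuous_pow 2).integrableOn_Icc.integrable.smul_measure hc

section LinearLabel

variable {μ : Measure ℝ} (c θ : ℝ)

lemma integral_sq_residual_map_linear :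
    ∫ z, (z.2 - θ * z.1) ^ 2 ∂(μ.map fun x => (x, c * x)) =
      (c - θ) ^ 2 * ∫ x, x ^ 2 ∂μ := by
  rw [integral_map (by fun_prop) (by fun_prop), ← integral_const_mul]
  congr 1 with x
  ring

lemma integrable_sq_residual_map_linear (hμ : Integrable (fun x : ℝ => x ^ 2) μ) :
    Integrable (fun z : ℝ × ℝ => (z.2 - θ * z.1) ^ 2) (μ.map fun x => (x, c * x)) := by
  rw [integrable_map_measure (by fun_prop) (by fun_prop)]
  refine (hμ.const_mul ((c - θ) ^ 2)).congr (ae_of_all _ fun x => ?_)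
  simp only [Function.comp_apply]
  ring

end LinearLabel

lemma integral_sq_residual_mixture {μ : Measure ℝ} (hμ : Integrable (fun x : ℝ => x ^ 2) μ)
    {a b : ℝ} (ha : 0 ≤ a) (hb : 0 ≤ b) (c d θ : ℝ) :
    ∫ z, (z.2 - θ * z.1) ^ 2 ∂(ENNReal.ofReal a • μ.map (fun x => (x, c * x)) +
        ENNReal.ofReal b • μ.map (fun x => (x, d * x))) =
      (a * (c - θ) ^ 2 + b * (d - θ) ^ 2) * ∫ x, x ^ 2 ∂μ := by
  rw [integral_add_measure
      ((integrable_sq_residual_map_linear c θ hμ).smul_measure ENNReal.ofReal_ne_top)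
      ((integrable_sq_residual_map_linear d θ hμ).smul_measure ENNReal.ofReal_ne_top),
    integral_smul_measure, integral_smul_measure, ENNReal.toReal_ofReal ha,
    ENNReal.toReal_ofReal hb, integral_sq_residual_map_linear, integral_sq_residual_map_linear,
    smul_eq_mul, smul_eq_mul]
  ring

lemma weighted_sq_sum_eq (α c d θ : ℝ) :
    α * (c - θ) ^ 2 + (1 - α) * (d - θ) ^ 2 =
      α * (1 - α) * (c - d) ^ 2 + (θ - (α * c + (1 - α) * d)) ^ 2 := by
  ring

/-- The overspecialization construction: with `C = √(Γ+ε) - 1` and `α = ε/(Γ+ε)`,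
the global minimizer has risk at most `ε`, while the specialist `θ̄₁ = C` for the
first mixture component has full-population risk exactly `Γ`. -/
theorem overspecialization_instance (ε Γ : ℝ) (hε : 0 < ε) (hεΓ : ε < Γ)
    (Cs α : ℝ) (hCs : Cs = Real.sqrt (Γ + ε) - 1) (hαdef : α = ε / (Γ + ε))
    (μ : Measure ℝ)
    (hμ : μ = (ENNReal.ofReal (2 * Real.sqrt 3))⁻¹ •
      volume.restrict (Set.Icc (-Real.sqrt 3) (Real.sqrt 3)))
    (P : Measure (ℝ × ℝ))
    (hP : P = ENNReal.ofReal α • μ.map (fun x => (x, Cs * x))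
            + ENNReal.ofReal (1 - α) • μ.map (fun x => (x, -x)))
    (𝓡 : ℝ → ℝ) (h𝓡 : ∀ θ, 𝓡 θ = ∫ z, (z.2 - θ * z.1) ^ 2 ∂P) :
    (0 < α ∧ α < 1) ∧
    (∀ θ, 𝓡 (α * Cs - (1 - α)) ≤ 𝓡 θ) ∧
    𝓡 (α * Cs - (1 - α)) ≤ ε ∧
    𝓡 Cs = Γ := by
  have hΓε : 0 < Γ + ε := by linarith
  have hα0 : 0 < α := by rw [hαdef]; positivity
  have hα1 : α < 1 := by rw [hαdef, div_lt_one hΓε]; linarith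
  have hαΓ : α * (Γ + ε) = ε := by rw [hαdef]; field_simp
  have hCs_sq : (Cs - -1) ^ 2 = Γ + ε := by
    rw [hCs, sub_neg_eq_add, sub_add_cancel, Real.sq_sqrt hΓε.le]
  have hmoment : ∫ x, x ^ 2 ∂μ = 1 := by
    rw [hμ, integral_sq_uniform_Icc_neg (by positivity), Real.sq_sqrt (by norm_num)]
    norm_num
  have hrisk (θ : ℝ) :
      𝓡 θ = α * (1 - α) * (Cs - -1) ^ 2 + (θ - (α * Cs - (1 - α))) ^ 2 := by
    have hneg : (fun x : ℝ => (x, -x)) = fun x => (x, -1 * x) := by simp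
    rw [h𝓡, hP, hneg, integral_sq_residual_mixture (hμ ▸ integrable_sq_smul_restrict_Icc
      (by simp) _ _) hα0.le (by linarith), hmoment, mul_one, weighted_sq_sum_eq]
    ring
  have hrisk_min : 𝓡 (α * Cs - (1 - α)) = (1 - α) * ε := by
    rw [hrisk, hCs_sq, sub_self]
    linear_combination (1 - α) * hαΓ
  refine ⟨⟨hα0, hα1⟩, fun θ => ?_, ?_, ?_⟩
  · rw [hrisk, hrisk, sub_self, zero_pow two_ne_zero, add_zero]
    exact le_add_of_nonneg_right (sq_nonneg _)
  · rw [hrisk_min]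
    nlinarith
  · rw [hrisk]
    linear_combination (1 - α) * hCs_sq - hαΓ
end
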